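/- Let (Ω, F, P) be a probability space, Q a probability measure with density dQ/dP = D > 0, and U : ℝ → ℝ a C², strictly increasing, strictly concave function with r ≤ -U''/U' ≤ R for constants 0 < r ≤ R. Let X, Y be real random variables with U'(X)/E[U'(X)] = D (the first-order condition). Then E_P[U(Y) - U(X)] ≥ α · E_Q[(Y - X) - (R/2) · exp(R |Y - X|) · (Y - X)²], where α := E_P[U'(X)] > 0, provided all expectations are finite. -/

import Mathlib

open MeasureTheory
open scoped ENNReal NNReal

private lemma expFact (s : ℝ) : Real.exp s - 1 ≤ s * Real.exp s := by
  have h := Real.add_one_le_exp (-s)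
  have h2 := mul_le_mul_of_nonneg_right h (Real.exp_pos s).le
  rw [← Real.exp_add] at h2
  simp at h2
  nlinarith

/-- log-Lipschitz bound on `deriv U` coming from `-U''/U' ≤ R`. -/
private lemma derivLog (U : ℝ → ℝ) (hU : ContDiff ℝ 2 U)
    (hU' : ∀ x, 0 < deriv U x) (R : ℝ)
    (hR2 : ∀ z, -(deriv (deriv U) z) / deriv U z ≤ R)
    {a b : ℝ} (hab : a ≤ b) :
    deriv U a ≤ deriv U b * Real.exp (R * (b - a)) := by
  have hd : Differentiable ℝ (deriv U) := by
    have h : ContDiff ℝ ((1:ℕ∞) + 1) U := by norm_num; exact hU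
    rw [contDiff_succ_iff_deriv] at h
    exact h.2.2.differentiable (by norm_num)
  have hφ : ∀ z, HasDerivAt (fun z => Real.log (deriv U z) + R * z)
      (deriv (deriv U) z / deriv U z + R) z := by
    intro z
    have h1 : HasDerivAt (deriv U) (deriv (deriv U) z) z := (hd z).hasDerivAt
    have h2 := h1.log (hU' z).ne'
    have h3 : HasDerivAt (fun y : ℝ => R * y) R z := by
      simpa using (hasDerivAt_id z).const_mul R
    exact h2.add h3
  have hmono : Monotone (fun z => Real.log (deriv U z) + R * z) := by
    apply monotone_of_deriv_nonneg
    · exact fun z => (hφ z).differentiableAt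
    · intro z
      rw [(hφ z).deriv]
      have h := hR2 z
      rw [neg_div] at h
      have := hU' z
      linarith
  have h := hmono hab
  simp only at h
  calc deriv U a = Real.exp (Real.log (deriv U a)) := (Real.exp_log (hU' a)).symm
    _ ≤ Real.exp (Real.log (deriv U b) + R * (b - a)) := by
        apply Real.exp_le_exp.mpr
        have : R * (b - a) = R * b - R * a := by ring
        linarith
    _ = deriv U b * Real.exp (R * (b - a)) := by
        rw [Real.exp_add, Real.exp_log (hU' b)]

/-- Pointwise second-order lower bound on the utility increment. -/
private lemma keyPointwise (U : ℝ → ℝ) (hU : ContDiff ℝ 2 U)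
    (hU' : ∀ x, 0 < deriv U x) (R : ℝ) (hR0 : 0 < R)
    (hR2 : ∀ z, -(deriv (deriv U) z) / deriv U z ≤ R) (x y : ℝ) :
    deriv U x * ((y - x) - (R / 2) * Real.exp (R * |y - x|) * (y - x) ^ 2)
      ≤ U y - U x := by
  have hc : Continuous U := hU.continuous
  have hUd : ∀ t, HasDerivAt U (deriv U t) t :=
    fun t => ((hU.differentiable (by norm_num)) t).hasDerivAt
  set c := deriv U x with hcdef
  have hcpos : 0 < c := hU' x
  rcases le_or_gt x y with hxy | hxy
  · -- case x ≤ y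
    set h : ℝ → ℝ := fun t => U t - U x - c * (t - x) + c * (R / 2) * (t - x) ^ 2
      with hhdef
    have hh : ∀ t, HasDerivAt h (deriv U t - c + c * R * (t - x)) t := by
      intro t
      have h1 : HasDerivAt (fun t : ℝ => t - x) 1 t := (hasDerivAt_id t).sub_const x
      have h2 := (h1.pow 2).const_mul (c * (R / 2))
      have h3 := (((hUd t).sub_const (U x)).sub (h1.const_mul c)).add h2
      exact h3.congr_deriv (by ring)
    have hmono : MonotoneOn h (Set.Icc x y) := by
      apply monotoneOn_of_deriv_nonneg (convex_Icc x y)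
      · apply Continuous.continuousOn; fun_prop
      · intro t ht
        exact ((hh t).differentiableAt).differentiableWithinAt
      · intro t ht
        rw [interior_Icc] at ht
        rw [(hh t).deriv]
        have hL := derivLog U hU hU' R hR2 ht.1.le
        have hF := expFact (R * (t - x))
        have hFc := mul_le_mul_of_nonneg_left hF hcpos.le
        have hEpos := Real.exp_pos (R * (t - x))
        have htx : 0 ≤ t - x := by linarith [ht.1]
        nlinarith [hU' t, mul_pos (hU' t) hEpos]
    have hx0 : h x = 0 := by simp [hhdef]
    have hxy2 := hmono (Set.left_mem_Icc.mpr hxy) (Set.right_mem_Icc.mpr hxy) hxy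
    rw [hx0] at hxy2
    have habs : |y - x| = y - x := abs_of_nonneg (by linarith)
    rw [habs]
    have hE1 : 1 ≤ Real.exp (R * (y - x)) := Real.one_le_exp (mul_nonneg hR0.le (by linarith))
    have h2 : c * (R / 2) * (y - x) ^ 2 * 1 ≤
        c * (R / 2) * (y - x) ^ 2 * Real.exp (R * (y - x)) := by
      apply mul_le_mul_of_nonneg_left hE1 (by positivity)
    simp only [hhdef] at hxy2
    nlinarith
  · -- case y < x
    set E0 := Real.exp (R * (x - y)) with hE0def
    set h : ℝ → ℝ := fun t => U t - U x - c * (t - x) + c * (R / 2) * E0 * (x - t) ^ 2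
      with hhdef
    have hh : ∀ t, HasDerivAt h (deriv U t - c - c * R * E0 * (x - t)) t := by
      intro t
      have h1 : HasDerivAt (fun t : ℝ => x - t) (-1) t := (hasDerivAt_id t).const_sub x
      have h1' : HasDerivAt (fun t : ℝ => t - x) 1 t := (hasDerivAt_id t).sub_const x
      have h2 := (h1.pow 2).const_mul (c * (R / 2) * E0)
      have h3 := (((hUd t).sub_const (U x)).sub (h1'.const_mul c)).add h2
      exact h3.congr_deriv (by ring)
    have hant : AntitoneOn h (Set.Icc y x) := by
      apply antitoneOn_of_deriv_nonpos (convex_Icc y x)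
      · apply Continuous.continuousOn; fun_prop
      · intro t ht
        exact ((hh t).differentiableAt).differentiableWithinAt
      · intro t ht
        rw [interior_Icc] at ht
        rw [(hh t).deriv]
        have hL := derivLog U hU hU' R hR2 ht.2.le
        have hF := expFact (R * (x - t))
        have hFc := mul_le_mul_of_nonneg_left hF hcpos.le
        have hxt : 0 ≤ x - t := by linarith [ht.2]
        have hle : Real.exp (R * (x - t)) ≤ E0 := by
          rw [hE0def]
          apply Real.exp_le_exp.mpr
          have : y ≤ t := ht.1.le
          nlinarith
        have h4 : c * R * (x - t) * Real.exp (R * (x - t)) ≤ c * R * (x - t) * E0 := by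
          apply mul_le_mul_of_nonneg_left hle (by positivity)
        nlinarith [Real.exp_pos (R * (x - t))]
    have hx0 : h x = 0 := by simp [hhdef]
    have hyx := hant (Set.left_mem_Icc.mpr hxy.le) (Set.right_mem_Icc.mpr hxy.le) hxy.le
    rw [hx0] at hyx
    have habs : |y - x| = x - y := by rw [abs_sub_comm]; exact abs_of_nonneg (by linarith)
    rw [habs]
    simp only [hhdef] at hyx
    nlinarith

/-- Lower bound for the expected utility difference under the first-order
condition `U'(X)/E[U'(X)] = dQ/dP` and bounded absolute risk aversion. -/
theorem stmt_12 {Ω : Type*} [MeasurableSpace Ω] (P : Measure Ω) [IsProbabilityMeasure P]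
    (U : ℝ → ℝ) (hU : ContDiff ℝ 2 U)
    (hU' : ∀ x, 0 < deriv U x) (hU'' : ∀ x, deriv (deriv U) x < 0)
    (r R : ℝ) (hr : 0 < r) (hrR : r ≤ R)
    (hra : ∀ z, r ≤ -(deriv (deriv U) z) / deriv U z ∧
      -(deriv (deriv U) z) / deriv U z ≤ R)
    (X Y : Ω → ℝ) (hXmeas : Measurable X) (hYmeas : Measurable Y)
    (D : Ω → ℝ) (hDmeas : Measurable D) (hD : ∀ ω, 0 < D ω)
    (Q : Measure Ω) (hQ : Q = P.withDensity (fun ω => ENNReal.ofReal (D ω)))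
    (α : ℝ) (hα : α = ∫ ω, deriv U (X ω) ∂P)
    (hFOC : ∀ ω, deriv U (X ω) / α = D ω)
    (hUX : Integrable (fun ω => U (X ω)) P)
    (hUY : Integrable (fun ω => U (Y ω)) P)
    (hU'X : Integrable (fun ω => deriv U (X ω)) P)
    (hRHS : Integrable (fun ω =>
      (Y ω - X ω) - (R / 2) * Real.exp (R * |Y ω - X ω|) * (Y ω - X ω) ^ 2) Q) :
    α * ∫ ω, ((Y ω - X ω) -
        (R / 2) * Real.exp (R * |Y ω - X ω|) * (Y ω - X ω) ^ 2) ∂Q ≤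
      ∫ ω, (U (Y ω) - U (X ω)) ∂P := by
  have hR0 : 0 < R := lt_of_lt_of_le hr hrR
  set g : Ω → ℝ := fun ω =>
    (Y ω - X ω) - (R / 2) * Real.exp (R * |Y ω - X ω|) * (Y ω - X ω) ^ 2 with hgdef
  -- α is positive
  have hΩ : Nonempty Ω := by
    by_contra hstr
    rw [not_nonempty_iff] at hstr
    have h1 := measure_univ (μ := P)
    rw [Set.univ_eq_empty_iff.mpr hstr] at h1
    simp at h1
  obtain ⟨ω₀⟩ := hΩ
  have hαpos : 0 < α := by
    have h1 : 0 < deriv U (X ω₀) / α := by rw [hFOC ω₀]; exact hD ω₀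
    rcases div_pos_iff.mp h1 with ⟨_, h⟩ | ⟨h, _⟩
    · exact h
    · linarith [hU' (X ω₀)]
  have hαD : ∀ ω, α * D ω = deriv U (X ω) := by
    intro ω
    rw [← hFOC ω]
    field_simp
  -- density as an ℝ≥0-valued function
  have hDnn : Measurable (fun ω => Real.toNNReal (D ω)) := hDmeas.real_toNNReal
  have hQ' : Q = P.withDensity (fun ω => ((Real.toNNReal (D ω) : ℝ≥0) : ℝ≥0∞)) := by
    rw [hQ]
    congr 1
  -- change of measure for the integral
  have hkey : ∫ ω, g ω ∂Q = ∫ ω, D ω * g ω ∂P := by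
    rw [hQ', integral_withDensity_eq_integral_smul hDnn g]
    apply integral_congr_ae
    filter_upwards with ω
    simp [NNReal.smul_def, Real.coe_toNNReal _ (hD ω).le]
  -- integrability of the transported integrand
  have hint : Integrable (fun ω => D ω * g ω) P := by
    rw [hQ'] at hRHS
    have h1 := (integrable_withDensity_iff_integrable_smul hDnn).mp hRHS
    have h2 : (fun ω => Real.toNNReal (D ω) • g ω) = fun ω => D ω * g ω := by
      funext ω
      simp [NNReal.smul_def, Real.coe_toNNReal _ (hD ω).le]
    rwa [h2] at h1
  rw [hkey, ← integral_const_mul]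
  apply integral_mono (hint.const_mul α) (hUY.sub hUX)
  intro ω
  have h1 : α * (D ω * g ω) = deriv U (X ω) * g ω := by
    rw [← mul_assoc, hαD ω]
  simp only
  rw [h1, hgdef]
  exact keyPointwise U hU hU' R hR0 (fun z => (hra z).2) (X ω) (Y ω)
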